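/- With the hypotheses of the optimal-scaling theorem, P̃·P_opt = (I_d + Ddiag(Zᴴ·ΔZ)·K^{-1})^{-1}, where K = Ddiag(Zᴴ·Z) and P_opt = Ddiag(Zᴴ·(Z+ΔZ)·P̃·K^{-1})^{-1}. -/
import Mathlib


open Matrix

/-- `Ddiag` keeps the diagonal and zeros the off-diagonal entries. -/
def Ddiag {d : ℕ} (X : Matrix (Fin d) (Fin d) ℂ) : Matrix (Fin d) (Fin d) ℂ :=
  Matrix.of fun i j => if i = j then X i j else 0

lemma Ddiag_eq {d : ℕ} (X : Matrix (Fin d) (Fin d) ℂ) :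
    Ddiag X = Matrix.diagonal (fun i => X i i) := by
  ext i j
  by_cases h : i = j <;> simp [Ddiag, Matrix.diagonal, h]

lemma diag_unit_det {d : ℕ} (v : Fin d → ℂ)
    (h : IsUnit (Matrix.diagonal v).det) : ∀ i, v i ≠ 0 := by
  intro i
  rw [Matrix.det_diagonal, isUnit_iff_ne_zero, Finset.prod_ne_zero_iff] at h
  exact h i (Finset.mem_univ i)

lemma inv_diagonal' {d : ℕ} (v : Fin d → ℂ) (h : ∀ i, v i ≠ 0) :
    (Matrix.diagonal v)⁻¹ = Matrix.diagonal (fun i => (v i)⁻¹) := by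
  apply Matrix.inv_eq_right_inv
  rw [Matrix.diagonal_mul_diagonal]
  have : (fun i => v i * (v i)⁻¹) = fun _ => (1 : ℂ) := by
    funext i; exact mul_inv_cancel₀ (h i)
  rw [this, Matrix.diagonal_one]

/-- With `K = Ddiag(Zᴴ Z)` and `P_opt = Ddiag(Zᴴ·(Z+ΔZ)·P̃·K⁻¹)⁻¹`, one has
`P̃·P_opt = (I + Ddiag(Zᴴ·ΔZ)·K⁻¹)⁻¹`. -/
theorem stmt7 {d : ℕ} (Z ΔZ : Matrix (Fin d) (Fin d) ℂ)
    (hcols : ∀ j, ∃ i, Z i j ≠ 0)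
    (Pt : Matrix (Fin d) (Fin d) ℂ) (hPtdiag : ∀ i j, i ≠ j → Pt i j = 0)
    (hPt : IsUnit Pt.det)
    (hK : IsUnit (Ddiag (Zᴴ * Z)).det)
    (hPopt : IsUnit (Ddiag (Zᴴ * (Z + ΔZ) * Pt * (Ddiag (Zᴴ * Z))⁻¹)).det)
    (hI : IsUnit (1 + Ddiag (Zᴴ * ΔZ) * (Ddiag (Zᴴ * Z))⁻¹).det) :
    Pt * (Ddiag (Zᴴ * (Z + ΔZ) * Pt * (Ddiag (Zᴴ * Z))⁻¹))⁻¹ =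
      (1 + Ddiag (Zᴴ * ΔZ) * (Ddiag (Zᴴ * Z))⁻¹)⁻¹ := by
  set k : Fin d → ℂ := fun i => (Zᴴ * Z) i i with hk
  set e : Fin d → ℂ := fun i => (Zᴴ * ΔZ) i i with he
  set p : Fin d → ℂ := fun i => Pt i i with hp
  have hPtd : Pt = Matrix.diagonal p := by
    ext i j
    by_cases h : i = j
    · subst h; simp [Matrix.diagonal, p]
    · simp [Matrix.diagonal, h, hPtdiag i j h]
  have hKd : Ddiag (Zᴴ * Z) = Matrix.diagonal k := Ddiag_eq _
  have hkne : ∀ i, k i ≠ 0 := diag_unit_det k (hKd ▸ hK)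
  have hKinv : (Ddiag (Zᴴ * Z))⁻¹ = Matrix.diagonal (fun i => (k i)⁻¹) := by
    rw [hKd]; exact inv_diagonal' k hkne
  have hpne : ∀ i, p i ≠ 0 := diag_unit_det p (hPtd ▸ hPt)
  have hMid : Ddiag (Zᴴ * (Z + ΔZ) * Pt * (Ddiag (Zᴴ * Z))⁻¹)
      = Matrix.diagonal (fun i => (k i + e i) * p i * (k i)⁻¹) := by
    rw [Ddiag_eq, hKinv, hPtd]
    congr 1
    ext i
    simp [Matrix.mul_diagonal, Matrix.mul_add, Matrix.add_apply, k, e, p,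
      mul_comm, mul_assoc]
  have hId : (1 : Matrix (Fin d) (Fin d) ℂ) + Ddiag (Zᴴ * ΔZ) * (Ddiag (Zᴴ * Z))⁻¹
      = Matrix.diagonal (fun i => 1 + e i * (k i)⁻¹) := by
    rw [Ddiag_eq, hKinv, Matrix.diagonal_mul_diagonal, ← Matrix.diagonal_one,
      Matrix.diagonal_add]
  have hine : ∀ i, 1 + e i * (k i)⁻¹ ≠ 0 := diag_unit_det _ (hId ▸ hI)
  have hkene : ∀ i, k i + e i ≠ 0 := by
    intro i h
    apply hine i
    have h2 : (1 : ℂ) + e i * (k i)⁻¹ = (k i + e i) * (k i)⁻¹ := by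
      rw [add_mul, mul_inv_cancel₀ (hkne i), add_comm]
    rw [h2, h, zero_mul]
  rw [hMid, hId, hPtd,
    inv_diagonal' _ (fun i => mul_ne_zero (mul_ne_zero (hkene i) (hpne i))
      (inv_ne_zero (hkne i))),
    inv_diagonal' _ hine, Matrix.diagonal_mul_diagonal]
  ext i j
  by_cases hij : i = j
  · subst hij
    simp only [Matrix.diagonal_apply_eq, Pi.mul_apply]
    have h3 : (1 : ℂ) + e i * (k i)⁻¹ = (k i + e i) * (k i)⁻¹ := by
      rw [add_mul, mul_inv_cancel₀ (hkne i), add_comm]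
    have h4 : (k i + e i) * p i * (k i)⁻¹ ≠ 0 :=
      mul_ne_zero (mul_ne_zero (hkene i) (hpne i)) (inv_ne_zero (hkne i))
    rw [show ((k i + e i) * p i * (k i)⁻¹)⁻¹
          = (k i + e i)⁻¹ * (p i)⁻¹ * k i by rw [mul_inv, mul_inv, inv_inv],
      show ((1 : ℂ) + e i * (k i)⁻¹)⁻¹ = (k i + e i)⁻¹ * k i by
        rw [h3, mul_inv, inv_inv],
      show p i * ((k i + e i)⁻¹ * (p i)⁻¹ * k i)
          = (p i * (p i)⁻¹) * ((k i + e i)⁻¹ * k i) by ring,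
      mul_inv_cancel₀ (hpne i), one_mul]
  · simp [Matrix.diagonal_apply_ne _ hij]
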